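/- arXiv:2007.08137 — 4 statements merged into one kernel-verified Lean document; each statement's English description precedes it below -/
import Mathlib

section
/- Let G_1,...,G_n ∈ R^d, let G* ∈ R^d, and let s, s̃ be probability weight vectors on [n] with total variation distance at most ε such that λ_max(Σ_i s_i G_i G_i^T) ≤ C · λ_max(Σ_i s̃_i G_i G_i^T) for some C ≥ 1. Then ‖Σ_i s_i G_i − G*‖ ≤ ‖Σ_i s̃_i G_i − G*‖ + sqrt(2(C+1) ε λ_max(Σ_i s̃_i G_i G_i^T)). -/
open scoped BigOperators

/-- Largest eigenvalue (Rayleigh quotient supremum) of a matrix. -/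
noncomputable def lamMax {d : ℕ} (A : Matrix (Fin d) (Fin d) ℝ) : ℝ :=
  sSup {r : ℝ | ∃ v : Fin d → ℝ, (∑ i, v i ^ 2) = 1 ∧ r = ∑ i, ∑ j, v i * A i j * v j}

open scoped RealInnerProductSpace

/-!
Test `u := Σ sᵢ Gᵢ - Σ s̃ᵢ Gᵢ` against a unit vector `v`: with `cᵢ = ⟪Gᵢ, v⟫`,
Cauchy–Schwarz with weights `|sᵢ - s̃ᵢ|` gives
`⟪u, v⟫² ≤ (Σ |sᵢ - s̃ᵢ|) · Σ |sᵢ - s̃ᵢ| cᵢ² ≤ 2ε · (Σ sᵢ cᵢ² + Σ s̃ᵢ cᵢ²)`,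
and the two second moments along `v` are Rayleigh quotients, bounded by `C λ̃` and `λ̃`.
The triangle inequality through `Σ s̃ᵢ Gᵢ` finishes the proof.
-/

section WeightedSums

variable {ι : Type*} [Fintype ι]

lemma sq_sum_mul_le_sum_abs_mul_sum_abs_mul_sq (δ c : ι → ℝ) :
    (∑ i, δ i * c i) ^ 2 ≤ (∑ i, |δ i|) * ∑ i, |δ i| * c i ^ 2 :=
  Finset.sum_sq_le_sum_mul_sum_of_sq_le_mul _ (fun i _ => abs_nonneg _)
    (fun i _ => by positivity) fun i _ => le_of_eq (by rw [mul_pow, ← sq_abs (δ i)]; ring)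

lemma sq_sum_sub_mul_le (p q c : ι → ℝ) (hp : ∀ i, 0 ≤ p i) (hq : ∀ i, 0 ≤ q i) :
    (∑ i, (p i - q i) * c i) ^ 2 ≤
      (∑ i, |p i - q i|) * (∑ i, p i * c i ^ 2 + ∑ i, q i * c i ^ 2) := by
  refine (sq_sum_mul_le_sum_abs_mul_sum_abs_mul_sq _ c).trans
    (mul_le_mul_of_nonneg_left ?_ (Finset.sum_nonneg fun i _ => abs_nonneg _))
  rw [← Finset.sum_add_distrib]
  refine Finset.sum_le_sum fun i _ => ?_
  have hpq : |p i - q i| ≤ p i + q i := abs_sub_le_iff.2 ⟨by linarith [hq i], by linarith [hp i]⟩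
  nlinarith [sq_nonneg (c i)]

variable {E : Type*} [NormedAddCommGroup E] [InnerProductSpace ℝ E]

lemma inner_sum_smul_sub_sum_smul (G : ι → E) (p q : ι → ℝ) (v : E) :
    ⟪∑ i, p i • G i - ∑ i, q i • G i, v⟫ = ∑ i, (p i - q i) * ⟪G i, v⟫ := by
  simp only [← Finset.sum_sub_distrib, ← sub_smul, sum_inner, real_inner_smul_left]

lemma norm_le_sqrt_of_forall_inner_sq_le {x : E} {R : ℝ}
    (h : ∀ v : E, ‖v‖ = 1 → ⟪x, v⟫ ^ 2 ≤ R) : ‖x‖ ≤ √R := by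
  rcases eq_or_ne x 0 with rfl | hx
  · simp
  have hx' : ‖x‖ ≠ 0 := norm_ne_zero_iff.2 hx
  have hself : ⟪x, ‖x‖⁻¹ • x⟫ = ‖x‖ := by
    rw [real_inner_smul_right, real_inner_self_eq_norm_sq]
    field_simp
  refine (le_abs_self _).trans (Real.abs_le_sqrt ?_)
  simpa [hself] using h _ (norm_smul_inv_norm (𝕜 := ℝ) hx)

end WeightedSums

section SecondMoment

variable {ι : Type*} [Fintype ι] {d : ℕ}

def momentMatrix (G : ι → EuclideanSpace ℝ (Fin d)) (w : ι → ℝ) : Matrix (Fin d) (Fin d) ℝ :=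
  ∑ i, w i • Matrix.of fun a b => G i a * G i b

lemma lamMax_bddAbove (A : Matrix (Fin d) (Fin d) ℝ) :
    BddAbove {r : ℝ | ∃ v : Fin d → ℝ, (∑ i, v i ^ 2) = 1 ∧
      r = ∑ i, ∑ j, v i * A i j * v j} := by
  refine ⟨∑ i, ∑ j, |A i j|, ?_⟩
  rintro r ⟨v, hv, rfl⟩
  have hv_le : ∀ i, |v i| ≤ 1 := fun i => by
    rw [← sq_le_one_iff_abs_le_one, ← hv]
    exact Finset.single_le_sum (fun j _ => sq_nonneg (v j)) (Finset.mem_univ i)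
  refine Finset.sum_le_sum fun i _ => Finset.sum_le_sum fun j _ => ?_
  calc v i * A i j * v j ≤ |v i| * |A i j| * |v j| := by
        rw [← abs_mul, ← abs_mul]; exact le_abs_self _
    _ ≤ 1 * |A i j| * 1 := by gcongr <;> exact hv_le _
    _ = |A i j| := by ring

lemma quadForm_momentMatrix (G : ι → EuclideanSpace ℝ (Fin d)) (w : ι → ℝ)
    (v : EuclideanSpace ℝ (Fin d)) :
    ∑ a, ∑ b, v a * momentMatrix G w a b * v b = ∑ i, w i * ⟪G i, v⟫ ^ 2 := by
  simp only [momentMatrix, Matrix.sum_apply, Matrix.smul_apply, Matrix.of_apply, smul_eq_mul,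
    PiLp.inner_apply, RCLike.inner_apply, conj_trivial, sq, Finset.mul_sum, Finset.sum_mul]
  refine (Finset.sum_congr rfl fun a _ => Finset.sum_comm).trans (Finset.sum_comm.trans ?_)
  refine Finset.sum_congr rfl fun i _ => Finset.sum_congr rfl fun a _ =>
    Finset.sum_congr rfl fun b _ => ?_
  ring

lemma sum_mul_inner_sq_le_lamMax (G : ι → EuclideanSpace ℝ (Fin d)) (w : ι → ℝ)
    {v : EuclideanSpace ℝ (Fin d)} (hv : ‖v‖ = 1) :
    ∑ i, w i * ⟪G i, v⟫ ^ 2 ≤ lamMax (momentMatrix G w) :=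
  le_csSup (lamMax_bddAbove _)
    ⟨v, by rw [← EuclideanSpace.real_norm_sq_eq, hv, one_pow], (quadForm_momentMatrix G w v).symm⟩

end SecondMoment

theorem weighted_mean_close_of_tv_close_general (n d : ℕ)
    (G : Fin n → EuclideanSpace ℝ (Fin d)) (Gstar : EuclideanSpace ℝ (Fin d))
    (s stilde : Fin n → ℝ)
    (hs : (∑ i, s i) = 1 ∧ ∀ i, 0 ≤ s i)
    (hstilde : (∑ i, stilde i) = 1 ∧ ∀ i, 0 ≤ stilde i)
    (ε C : ℝ)
    (htv : (1 / 2) * ∑ i, |s i - stilde i| ≤ ε)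
    (hcomp : lamMax (∑ i, s i • Matrix.of fun a b => G i a * G i b) ≤
      C * lamMax (∑ i, stilde i • Matrix.of fun a b => G i a * G i b)) :
    ‖(∑ i, s i • G i) - Gstar‖ ≤ ‖(∑ i, stilde i • G i) - Gstar‖ +
      Real.sqrt (2 * (C + 1) * ε *
        lamMax (∑ i, stilde i • Matrix.of fun a b => G i a * G i b)) := by
  set lam := lamMax (momentMatrix G stilde)
  have hmeans : ‖∑ i, s i • G i - ∑ i, stilde i • G i‖ ≤ √(2 * (C + 1) * ε * lam) := by
    refine norm_le_sqrt_of_forall_inner_sq_le fun v hv => ?_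
    set X := ∑ i, s i * ⟪G i, v⟫ ^ 2 + ∑ i, stilde i * ⟪G i, v⟫ ^ 2
    have hX_nonneg : 0 ≤ X :=
      add_nonneg (Finset.sum_nonneg fun i _ => mul_nonneg (hs.2 i) (sq_nonneg _))
        (Finset.sum_nonneg fun i _ => mul_nonneg (hstilde.2 i) (sq_nonneg _))
    have hX : X ≤ (C + 1) * lam := by
      have hcomp_s : lamMax (momentMatrix G s) ≤ C * lam := hcomp
      linarith [sum_mul_inner_sq_le_lamMax G s hv, sum_mul_inner_sq_le_lamMax G stilde hv]
    calc ⟪∑ i, s i • G i - ∑ i, stilde i • G i, v⟫ ^ 2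
        ≤ (∑ i, |s i - stilde i|) * X := by
          rw [inner_sum_smul_sub_sum_smul]; exact sq_sum_sub_mul_le _ _ _ hs.2 hstilde.2
      _ ≤ (∑ i, |s i - stilde i|) * ((C + 1) * lam) := by gcongr
      _ ≤ 2 * ε * ((C + 1) * lam) := by gcongr; exacts [hX_nonneg.trans hX, by linarith]
      _ = 2 * (C + 1) * ε * lam := by ring
  calc ‖∑ i, s i • G i - Gstar‖
      ≤ ‖∑ i, s i • G i - ∑ i, stilde i • G i‖ + ‖∑ i, stilde i • G i - Gstar‖ :=
        norm_sub_le_norm_sub_add_norm_sub _ _ _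
    _ ≤ ‖∑ i, stilde i • G i - Gstar‖ + √(2 * (C + 1) * ε * lam) := by linarith

/-- Two weightings with small TV distance and comparable second moments give
nearby weighted means. -/
theorem weighted_mean_close_of_tv_close (n d : ℕ)
    (G : Fin n → EuclideanSpace ℝ (Fin d)) (Gstar : EuclideanSpace ℝ (Fin d))
    (s stilde : Fin n → ℝ)
    (hs : (∑ i, s i) = 1 ∧ ∀ i, 0 ≤ s i)
    (hstilde : (∑ i, stilde i) = 1 ∧ ∀ i, 0 ≤ stilde i)
    (ε C : ℝ) (hε : 0 ≤ ε) (hC : 1 ≤ C)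
    (htv : (1 / 2) * ∑ i, |s i - stilde i| ≤ ε)
    (hcomp : lamMax (∑ i, s i • Matrix.of fun a b => G i a * G i b) ≤
      C * lamMax (∑ i, stilde i • Matrix.of fun a b => G i a * G i b)) :
    ‖(∑ i, s i • G i) - Gstar‖ ≤ ‖(∑ i, stilde i • G i) - Gstar‖ +
      Real.sqrt (2 * (C + 1) * ε *
        lamMax (∑ i, stilde i • Matrix.of fun a b => G i a * G i b)) :=
  weighted_mean_close_of_tv_close_general n d G Gstar s stilde hs hstilde ε C htv hcomp
end

section
/- Consider the iteration w_{t+1} = w_t − (Σ(w_t − w*) + e_t) in R^d, where Σ is symmetric with 1/κ ≤ λ_min(Σ) and ‖Σ‖ = 1, and the error sequence satisfies ‖e_t‖ ≤ c(‖w_t − w*‖ + σ) with c < 1/(2κ). Then for all t, ‖w_t − w*‖ ≤ e^{−t/(2κ)} ‖w_0 − w*‖ + 4cσκ. -/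
open scoped InnerProductSpace

/-- The spectral (operator) norm of a real matrix, via its action on Euclidean space. -/
noncomputable def specNorm {d : ℕ} (A : Matrix (Fin d) (Fin d) ℝ) : ℝ :=
  ‖Matrix.toEuclideanCLM (𝕜 := ℝ) A‖

/-!
With `x_t = w_t − w*` the iteration reads `x_{t+1} = (I − Σ) x_t − e_t`. The operator `I − Σ` is
symmetric with `0 ≤ ⟪v, (I − Σ) v⟫ ≤ (1 − 1/κ)‖v‖²`, so its norm, the supremum of its Rayleigh
quotient, is at most `1 − 1/κ` (in positive dimension the hypotheses force `κ ≥ 1`). With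
`c < 1/(2κ)` this gives `‖x_{t+1}‖ ≤ (1 − 1/(2κ))‖x_t‖ + cσ`; unrolling this linear recursion and
using `(1 − 1/(2κ))^t ≤ e^{−t/(2κ)}` gives the bound.
-/

namespace ContinuousLinearMap

variable {E : Type*} [NormedAddCommGroup E] [InnerProductSpace ℝ E]

theorem norm_le_of_abs_inner_le {T : E →L[ℝ] E} (hT : (T : E →ₗ[ℝ] E).IsSymmetric) {M : ℝ}
    (hM : 0 ≤ M) (h : ∀ v, |⟪T v, v⟫_ℝ| ≤ M * ‖v‖ ^ 2) : ‖T‖ ≤ M := by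
  rw [T.norm_eq_iSup_rayleighQuotient hT]
  refine ciSup_le fun v ↦ ?_
  rw [rayleighQuotient, abs_div, abs_sq]
  exact div_le_of_le_mul₀ (sq_nonneg _) hM (h v)

theorem inner_apply_le_norm_sq {T : E →L[ℝ] E} (hT : ‖T‖ ≤ 1) (v : E) :
    ⟪v, T v⟫_ℝ ≤ ‖v‖ ^ 2 :=
  calc ⟪v, T v⟫_ℝ ≤ ‖v‖ * ‖T v‖ := real_inner_le_norm _ _
    _ ≤ ‖v‖ * (1 * ‖v‖) := by gcongr; exact T.le_of_opNorm_le hT v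
    _ = ‖v‖ ^ 2 := by ring

theorem le_one_of_mul_norm_sq_le_inner [Nontrivial E] {T : E →L[ℝ] E} (hT : ‖T‖ ≤ 1) {m : ℝ}
    (hm : ∀ v, m * ‖v‖ ^ 2 ≤ ⟪v, T v⟫_ℝ) : m ≤ 1 := by
  obtain ⟨v, hv⟩ := exists_ne (0 : E)
  have hv : 0 < ‖v‖ ^ 2 := by positivity
  refine le_of_mul_le_mul_right ?_ hv
  linarith [hm v, T.inner_apply_le_norm_sq hT v]

theorem norm_sub_apply_le_of_mul_norm_sq_le_inner {T : E →L[ℝ] E}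
    (hT : (T : E →ₗ[ℝ] E).IsSymmetric) (hT1 : ‖T‖ ≤ 1) {m : ℝ} (hm1 : m ≤ 1)
    (hm : ∀ v, m * ‖v‖ ^ 2 ≤ ⟪v, T v⟫_ℝ) (v : E) : ‖v - T v‖ ≤ (1 - m) * ‖v‖ := by
  set S : E →L[ℝ] E := 1 - T
  have hS : (S : E →ₗ[ℝ] E).IsSymmetric := LinearMap.IsSymmetric.one.sub hT
  have hSv : ∀ x, |⟪S x, x⟫_ℝ| ≤ (1 - m) * ‖x‖ ^ 2 := fun x ↦ by
    have hSx : ⟪S x, x⟫_ℝ = ‖x‖ ^ 2 - ⟪x, T x⟫_ℝ := by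
      simp [S, inner_sub_left, real_inner_comm]
    have hTx := T.inner_apply_le_norm_sq hT1 x
    rw [hSx, abs_of_nonneg (by linarith)]
    linarith [hm x]
  exact S.le_of_opNorm_le (S.norm_le_of_abs_inner_le hS (by linarith) hSv) v

end ContinuousLinearMap

theorem le_pow_mul_add_of_le_mul_add {r : ℕ → ℝ} {ρ b B : ℝ} (hρ : 0 ≤ ρ) (hB : 0 ≤ B)
    (hfix : ρ * B + b ≤ B) (hr : ∀ t, r (t + 1) ≤ ρ * r t + b) (t : ℕ) :
    r t ≤ ρ ^ t * r 0 + B := by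
  induction t with
  | zero => simpa using hB
  | succ t ih =>
    calc r (t + 1) ≤ ρ * r t + b := hr t
      _ ≤ ρ * (ρ ^ t * r 0 + B) + b := by gcongr
      _ = ρ ^ (t + 1) * r 0 + (ρ * B + b) := by ring
      _ ≤ ρ ^ (t + 1) * r 0 + B := by gcongr

theorem Real.one_sub_pow_le_exp_neg_mul {x : ℝ} (hx : x ≤ 1) (t : ℕ) :
    (1 - x) ^ t ≤ Real.exp (-(t * x)) := by
  calc (1 - x) ^ t ≤ Real.exp (-x) ^ t :=
        pow_le_pow_left₀ (by linarith) (Real.one_sub_le_exp_neg x) t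
    _ = Real.exp (-(t * x)) := by rw [← Real.exp_nat_mul, mul_neg]

/-- Inexact gradient descent: for the iteration
`w_{t+1} = w_t − (Σ(w_t − w*) + e_t)` with `1/κ ≤ λ_min(Σ)`, `‖Σ‖ = 1` and
`‖e_t‖ ≤ c(‖w_t − w*‖ + σ)`, `c < 1/(2κ)`, one has
`‖w_t − w*‖ ≤ e^{−t/(2κ)}‖w_0 − w*‖ + 4cσκ` for all `t`. -/
theorem gradient_descent_with_errors (d : ℕ)
    (Smat : Matrix (Fin d) (Fin d) ℝ) (hsymm : Smat.IsSymm)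
    (κ c σ : ℝ) (hκ : 0 < κ) (hc : 0 < c) (hσ : 0 < σ)
    (hmin : ∀ v : EuclideanSpace ℝ (Fin d),
      (1 / κ) * ‖v‖ ^ 2 ≤ ⟪v, Matrix.toEuclideanLin Smat v⟫_ℝ)
    (hnorm : specNorm Smat = 1)
    (hcκ : c < 1 / (2 * κ))
    (w : ℕ → EuclideanSpace ℝ (Fin d)) (wstar : EuclideanSpace ℝ (Fin d))
    (e : ℕ → EuclideanSpace ℝ (Fin d))
    (he : ∀ t, ‖e t‖ ≤ c * (‖w t - wstar‖ + σ))
    (hiter : ∀ t, w (t + 1) = w t - (Matrix.toEuclideanLin Smat (w t - wstar) + e t)) :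
    ∀ t : ℕ, ‖w t - wstar‖ ≤
      Real.exp (-(t : ℝ) / (2 * κ)) * ‖w 0 - wstar‖ + 4 * c * σ * κ := by
  intro t
  rcases subsingleton_or_nontrivial (EuclideanSpace ℝ (Fin d)) with hE | hE
  · rw [Subsingleton.elim (w t) wstar, sub_self, norm_zero]
    positivity
  set T := Matrix.toEuclideanCLM (𝕜 := ℝ) Smat
  have hT : (T : EuclideanSpace ℝ (Fin d) →ₗ[ℝ] _).IsSymmetric :=
    Matrix.isSymmetric_toEuclideanLin_iff.mpr hsymm
  have hκ1 : 1 / κ ≤ 1 := T.le_one_of_mul_norm_sq_le_inner hnorm.le hmin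
  have hκ2 : 1 / (2 * κ) = 1 / κ / 2 := by ring
  have hstep : ∀ t, ‖w (t + 1) - wstar‖ ≤ (1 - 1 / (2 * κ)) * ‖w t - wstar‖ + c * σ := fun t ↦
    calc ‖w (t + 1) - wstar‖ = ‖(w t - wstar - T (w t - wstar)) - e t‖ := by
          rw [hiter t]; congr 1; change _ = _ - Matrix.toEuclideanLin Smat _ - _; abel
      _ ≤ (1 - 1 / κ) * ‖w t - wstar‖ + c * (‖w t - wstar‖ + σ) :=
          (norm_sub_le _ _).trans (add_le_add
            (T.norm_sub_apply_le_of_mul_norm_sq_le_inner hT hnorm.le hκ1 hmin _) (he t))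
      _ ≤ (1 - 1 / (2 * κ)) * ‖w t - wstar‖ + c * σ := by
          nlinarith [norm_nonneg (w t - wstar)]
  calc ‖w t - wstar‖ ≤ (1 - 1 / (2 * κ)) ^ t * ‖w 0 - wstar‖ + 4 * c * σ * κ := by
        have hfix : (1 - 1 / (2 * κ)) * (4 * c * σ * κ) + c * σ = 4 * c * σ * κ - c * σ := by
          field_simp; ring
        refine le_pow_mul_add_of_le_mul_add (r := fun t ↦ ‖w t - wstar‖) (by linarith)
          (by positivity) ?_ hstep t
        linarith [mul_pos hc hσ]
    _ ≤ Real.exp (-(t : ℝ) / (2 * κ)) * ‖w 0 - wstar‖ + 4 * c * σ * κ := by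
        rw [neg_div, div_eq_mul_one_div (t : ℝ)]
        gcongr
        exact Real.one_sub_pow_le_exp_neg_mul (by linarith) t
end

section
/- Let X be a random vector in R^d with E[XX^T] = Σ, ‖Σ‖ = 1, and L4-L2 hypercontractivity constant τ (E[⟨u,X⟩^4] ≤ τ (E[⟨u,X⟩^2])^2 for all unit u). Let C > √τ and condition on the event S_C = {‖X‖ ≤ C√d}. Then (1 − √τ/C) Σ ⪯ E[XX^T | S_C] ⪯ (1 − C^{−2})^{−1} Σ. -/
open MeasureTheory
open scoped InnerProductSpace Matrix

/-
Fix a direction `u` and put `Y = ⟪u, X⟫`, `S = {‖X‖ ≤ C√d}`. Markov's inequality applied to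
`E‖X‖² = tr Σ ≤ d` gives `P(Sᶜ) ≤ C⁻²`. By Cauchy–Schwarz and hypercontractivity the second moment
lost outside `S` is `E[Y²; Sᶜ] ≤ √(E[Y⁴] P(Sᶜ)) ≤ (√τ / C) E[Y²]`, so
`(1 - √τ/C) E[Y²] ≤ E[Y²; S] ≤ E[Y²]`. Dividing by `P(S) ∈ [1 - C⁻², 1]` yields both bounds
for the quadratic forms `u ↦ uᵀ M u`, which is the Loewner-order statement.
-/

namespace Matrix

variable {n : Type*} [Fintype n]

theorem posSemidef_sub_of_dotProduct_mulVec_le {A B : Matrix n n ℝ} (hA : A.IsHermitian)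
    (hB : B.IsHermitian) (h : ∀ x : n → ℝ, x ⬝ᵥ (B *ᵥ x) ≤ x ⬝ᵥ (A *ᵥ x)) :
    (A - B).PosSemidef :=
  posSemidef_iff_dotProduct_mulVec.mpr
    ⟨hA.sub hB, fun x => by simpa [sub_mulVec, dotProduct_sub] using h x⟩

end Matrix

section SecondMoment

variable {Ω n : Type*} [MeasurableSpace Ω] {ν : Measure Ω} {X : Ω → EuclideanSpace ℝ n}

noncomputable def secondMoment (ν : Measure Ω) (X : Ω → EuclideanSpace ℝ n) : Matrix n n ℝ :=
  Matrix.of fun i j => ∫ ω, X ω i * X ω j ∂ν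

theorem isHermitian_secondMoment : (secondMoment ν X).IsHermitian :=
  Matrix.IsHermitian.ext fun i j => by simp [secondMoment, mul_comm]

variable [Fintype n]

theorem inner_sq_eq_sum_sum (u x : EuclideanSpace ℝ n) :
    ⟪u, x⟫_ℝ ^ 2 = ∑ i, ∑ j, u i * u j * (x i * x j) := by
  simp only [PiLp.inner_apply, RCLike.inner_apply, conj_trivial, sq, Finset.sum_mul_sum]
  exact Finset.sum_congr rfl fun i _ => Finset.sum_congr rfl fun j _ => by ring

variable (hX : ∀ i j, Integrable (fun ω => X ω i * X ω j) ν)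
include hX

theorem integrable_inner_sq (u : EuclideanSpace ℝ n) :
    Integrable (fun ω => ⟪u, X ω⟫_ℝ ^ 2) ν := by
  simp only [inner_sq_eq_sum_sum]
  exact integrable_finsetSum _ fun i _ => integrable_finsetSum _ fun j _ =>
    (hX i j).const_mul _

theorem dotProduct_secondMoment_mulVec (x : n → ℝ) :
    x ⬝ᵥ (secondMoment ν X *ᵥ x) = ∫ ω, ⟪WithLp.toLp 2 x, X ω⟫_ℝ ^ 2 ∂ν := by
  simp only [inner_sq_eq_sum_sum]
  rw [integral_finsetSum _ fun i _ => integrable_finsetSum _ fun j _ => (hX i j).const_mul _]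
  refine Finset.sum_congr rfl fun i _ => ?_
  rw [integral_finsetSum _ fun j _ => (hX i j).const_mul _, Matrix.mulVec, dotProduct,
    Finset.mul_sum]
  refine Finset.sum_congr rfl fun j _ => ?_
  simp only [secondMoment, Matrix.of_apply, integral_const_mul]
  ring

theorem integrable_norm_sq : Integrable (fun ω => ‖X ω‖ ^ 2) ν := by
  simp_rw [EuclideanSpace.real_norm_sq_eq, sq]
  exact integrable_finsetSum _ fun i _ => hX i i

theorem trace_secondMoment : (secondMoment ν X).trace = ∫ ω, ‖X ω‖ ^ 2 ∂ν := by
  simp_rw [EuclideanSpace.real_norm_sq_eq, sq]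
  rw [integral_finsetSum _ fun i _ => hX i i]
  rfl

theorem posSemidef_smul_secondMoment_sub_smul_secondMoment {ν' : Measure Ω}
    (hX' : ∀ i j, Integrable (fun ω => X ω i * X ω j) ν') {a b : ℝ}
    (h : ∀ u : EuclideanSpace ℝ n,
      b * ∫ ω, ⟪u, X ω⟫_ℝ ^ 2 ∂ν' ≤ a * ∫ ω, ⟪u, X ω⟫_ℝ ^ 2 ∂ν) :
    (a • secondMoment ν X - b • secondMoment ν' X).PosSemidef := by
  refine Matrix.posSemidef_sub_of_dotProduct_mulVec_le
    (isHermitian_secondMoment.smul (.all a)) (isHermitian_secondMoment.smul (.all b)) fun x => ?_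
  simpa only [Matrix.smul_mulVec, dotProduct_smul, smul_eq_mul,
    dotProduct_secondMoment_mulVec hX, dotProduct_secondMoment_mulVec hX'] using h (WithLp.toLp 2 x)

end SecondMoment

section Hypercontractivity

variable {Ω E : Type*} [MeasurableSpace Ω] {μ : Measure Ω}
  [NormedAddCommGroup E] [InnerProductSpace ℝ E] {X : Ω → E} {τ : ℝ}

theorem integral_inner_pow_four_le_of_norm_eq_one
    (hX : ∀ u : E, ‖u‖ = 1 → ∫ ω, ⟪u, X ω⟫_ℝ ^ 4 ∂μ ≤ τ * (∫ ω, ⟪u, X ω⟫_ℝ ^ 2 ∂μ) ^ 2)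
    (u : E) : ∫ ω, ⟪u, X ω⟫_ℝ ^ 4 ∂μ ≤ τ * (∫ ω, ⟪u, X ω⟫_ℝ ^ 2 ∂μ) ^ 2 := by
  rcases eq_or_ne u 0 with rfl | hu
  · simp
  have hu' : ‖u‖ ≠ 0 := norm_ne_zero_iff.mpr hu
  have hinner : ∀ ω, ⟪u, X ω⟫_ℝ = ‖u‖ * ⟪‖u‖⁻¹ • u, X ω⟫_ℝ := fun ω => by
    rw [real_inner_smul_left, mul_inv_cancel_left₀ hu']
  have hunit : ‖‖u‖⁻¹ • u‖ = 1 := by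
    rw [norm_smul, norm_inv, norm_norm, inv_mul_cancel₀ hu']
  simp only [hinner, mul_pow, integral_const_mul]
  calc _ ≤ ‖u‖ ^ 4 * (τ * (∫ ω, ⟪‖u‖⁻¹ • u, X ω⟫_ℝ ^ 2 ∂μ) ^ 2) := by gcongr; exact hX _ hunit
    _ = _ := by ring

end Hypercontractivity

section Markov

variable {Ω E : Type*} [MeasurableSpace Ω] {μ : Measure Ω} [IsFiniteMeasure μ]
  [NormedAddCommGroup E] {X : Ω → E}

theorem measureReal_lt_norm_le_inv_sq (hX : Integrable (fun ω => ‖X ω‖ ^ 2) μ) {C m : ℝ}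
    (hC : 0 < C) (hm : ∫ ω, ‖X ω‖ ^ 2 ∂μ ≤ m) :
    μ.real {ω | C * √m < ‖X ω‖} ≤ C⁻¹ ^ 2 := by
  rcases le_or_gt m 0 with hm0 | hm0
  · have hzero : (fun ω => ‖X ω‖ ^ 2) =ᵐ[μ] 0 :=
      (integral_eq_zero_iff_of_nonneg (fun ω => by positivity) hX).mp
        (le_antisymm (hm.trans hm0) (integral_nonneg fun ω => by positivity))
    have hnull : μ {ω | C * √m < ‖X ω‖} = 0 := by
      rw [Real.sqrt_eq_zero'.mpr hm0, mul_zero, measure_eq_zero_iff_ae_notMem]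
      filter_upwards [hzero] with ω hω
      simp_all
    rw [measureReal_def, hnull, ENNReal.toReal_zero]
    positivity
  have hsub : {ω | C * √m < ‖X ω‖} ⊆ {ω | C ^ 2 * m ≤ ‖X ω‖ ^ 2} := fun ω hω => by
    have : (C * √m) ^ 2 ≤ ‖X ω‖ ^ 2 := pow_le_pow_left₀ (by positivity) (le_of_lt hω) 2
    rwa [mul_pow, Real.sq_sqrt hm0.le] at this
  have markov := mul_meas_ge_le_integral_of_nonneg (.of_forall fun ω => by positivity) hX
    (C ^ 2 * m)
  have hbound : μ.real {ω | C * √m < ‖X ω‖} * C ^ 2 * m ≤ 1 * m := by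
    calc _ = C ^ 2 * m * μ.real {ω | C * √m < ‖X ω‖} := by ring
      _ ≤ C ^ 2 * m * μ.real {ω | C ^ 2 * m ≤ ‖X ω‖ ^ 2} :=
          mul_le_mul_of_nonneg_left (measureReal_mono hsub) (by positivity)
      _ ≤ 1 * m := by linarith
  rw [inv_pow, ← one_div, le_div_iff₀ (by positivity)]
  exact le_of_mul_le_mul_right hbound hm0

end Markov

section Truncation

variable {Ω : Type*} [MeasurableSpace Ω] {μ : Measure Ω} {Y : Ω → ℝ} {τ C : ℝ} {T : Set Ω}

theorem sq_setIntegral_sq_le_integral_pow_four_mul_measureReal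
    [IsFiniteMeasure μ] (hY2 : Integrable (fun ω => Y ω ^ 2) μ)
    (hY4 : Integrable (fun ω => Y ω ^ 4) μ) (hT : MeasurableSet T) :
    (∫ ω in T, Y ω ^ 2 ∂μ) ^ 2 ≤ (∫ ω, Y ω ^ 4 ∂μ) * μ.real T := by
  have hY2_memLp : MemLp (fun ω => Y ω ^ 2) (ENNReal.ofReal 2) (μ.restrict T) := by
    rw [ENNReal.ofReal_ofNat, memLp_two_iff_integrable_sq hY2.aestronglyMeasurable.restrict]
    simpa only [← pow_mul] using hY4.restrict
  have holder := integral_mul_le_Lp_mul_Lq_of_nonneg Real.HolderConjugate.two_two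
    (.of_forall fun ω => sq_nonneg (Y ω)) (.of_forall fun _ => zero_le_one) hY2_memLp
    (memLp_const (1 : ℝ))
  simp only [mul_one, Real.rpow_two, ← pow_mul, setIntegral_const, smul_eq_mul,
    ← Real.sqrt_eq_rpow, one_pow] at holder
  have hY4_nonneg : 0 ≤ ∫ ω in T, Y ω ^ 4 ∂μ := setIntegral_nonneg hT fun ω _ => by positivity
  calc (∫ ω in T, Y ω ^ 2 ∂μ) ^ 2
      ≤ (√(∫ ω in T, Y ω ^ 4 ∂μ) * √(μ.real T)) ^ 2 :=
        pow_le_pow_left₀ (setIntegral_nonneg hT fun ω _ => sq_nonneg _) holder 2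
    _ = (∫ ω in T, Y ω ^ 4 ∂μ) * μ.real T := by
        rw [mul_pow, Real.sq_sqrt hY4_nonneg, Real.sq_sqrt measureReal_nonneg]
    _ ≤ (∫ ω, Y ω ^ 4 ∂μ) * μ.real T := mul_le_mul_of_nonneg_right
        (setIntegral_le_integral hY4 (.of_forall fun ω => by positivity)) measureReal_nonneg

theorem sq_integral_sq_le_integral_pow_four [IsProbabilityMeasure μ]
    (hY2 : Integrable (fun ω => Y ω ^ 2) μ) (hY4 : Integrable (fun ω => Y ω ^ 4) μ) :
    (∫ ω, Y ω ^ 2 ∂μ) ^ 2 ≤ ∫ ω, Y ω ^ 4 ∂μ := by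
  simpa using sq_setIntegral_sq_le_integral_pow_four_mul_measureReal hY2 hY4 MeasurableSet.univ

theorem setIntegral_sq_le_of_measureReal_le [IsFiniteMeasure μ]
    (hY2 : Integrable (fun ω => Y ω ^ 2) μ) (hY4 : Integrable (fun ω => Y ω ^ 4) μ)
    (hhc : ∫ ω, Y ω ^ 4 ∂μ ≤ τ * (∫ ω, Y ω ^ 2 ∂μ) ^ 2) (hτ : 0 ≤ τ) (hC : 0 < C)
    (hT : MeasurableSet T) (hTμ : μ.real T ≤ C⁻¹ ^ 2) :
    ∫ ω in T, Y ω ^ 2 ∂μ ≤ √τ / C * ∫ ω, Y ω ^ 2 ∂μ := by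
  refine (pow_le_pow_iff_left₀ (setIntegral_nonneg hT fun ω _ => sq_nonneg _)
    (mul_nonneg (by positivity) (integral_nonneg fun ω => sq_nonneg (Y ω))) two_ne_zero).mp ?_
  calc (∫ ω in T, Y ω ^ 2 ∂μ) ^ 2 ≤ (∫ ω, Y ω ^ 4 ∂μ) * μ.real T :=
        sq_setIntegral_sq_le_integral_pow_four_mul_measureReal hY2 hY4 hT
    _ ≤ τ * (∫ ω, Y ω ^ 2 ∂μ) ^ 2 * C⁻¹ ^ 2 :=
        mul_le_mul hhc hTμ measureReal_nonneg (by positivity)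
    _ = (√τ / C * ∫ ω, Y ω ^ 2 ∂μ) ^ 2 := by
        rw [div_eq_mul_inv, mul_pow, mul_pow, Real.sq_sqrt hτ]; ring

theorem truncated_integral_sq_bounds [IsProbabilityMeasure μ]
    (hY2 : Integrable (fun ω => Y ω ^ 2) μ) (hY4 : Integrable (fun ω => Y ω ^ 4) μ)
    (hhc : ∫ ω, Y ω ^ 4 ∂μ ≤ τ * (∫ ω, Y ω ^ 2 ∂μ) ^ 2) (hC : √τ < C)
    {S : Set Ω} (hS : MeasurableSet S) (hSμ : μ.real Sᶜ ≤ C⁻¹ ^ 2) :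
    (1 - √τ / C) * ∫ ω, Y ω ^ 2 ∂μ ≤ (μ.real S)⁻¹ * ∫ ω in S, Y ω ^ 2 ∂μ ∧
      (μ.real S)⁻¹ * ∫ ω in S, Y ω ^ 2 ∂μ ≤ (1 - C⁻¹ ^ 2)⁻¹ * ∫ ω, Y ω ^ 2 ∂μ := by
  set I := ∫ ω, Y ω ^ 2 ∂μ
  set IS := ∫ ω in S, Y ω ^ 2 ∂μ
  have hIS_nonneg : 0 ≤ IS := setIntegral_nonneg hS fun ω _ => sq_nonneg _
  have hIS_le : IS ≤ I := setIntegral_le_integral hY2 (.of_forall fun ω => sq_nonneg _)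
  have hI_nonneg : 0 ≤ I := integral_nonneg fun ω => sq_nonneg (Y ω)
  rcases hI_nonneg.eq_or_lt with hI | hI
  · have hIS : IS = 0 := le_antisymm (hI ▸ hIS_le) hIS_nonneg
    simp [← hI, hIS]
  -- Unless `Y = 0` a.e., Jensen forces `τ ≥ 1`, hence `C > 1` and `P(S) ≥ 1 - C⁻² > 0`.
  have hτ : 1 ≤ τ := by
    have := (sq_integral_sq_le_integral_pow_four hY2 hY4).trans hhc
    exact le_of_mul_le_mul_right (by linarith) (pow_pos hI 2)
  have hC1 : 1 < C := (Real.one_le_sqrt.mpr hτ).trans_lt hC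
  have hCinv : 0 < 1 - C⁻¹ ^ 2 := by
    have : C⁻¹ < 1 := inv_lt_one_of_one_lt₀ hC1
    nlinarith [inv_pos.mpr (zero_lt_one.trans hC1)]
  have hp_lower : 1 - C⁻¹ ^ 2 ≤ μ.real S := by
    rw [measureReal_compl hS, probReal_univ] at hSμ
    linarith
  have hp_le_one : μ.real S ≤ 1 := measureReal_le_one
  have htail := setIntegral_sq_le_of_measureReal_le hY2 hY4 hhc (zero_le_one.trans hτ)
    (zero_lt_one.trans hC1) hS.compl hSμ
  have hsplit : IS + ∫ ω in Sᶜ, Y ω ^ 2 ∂μ = I := integral_add_compl hS hY2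
  constructor
  · calc (1 - √τ / C) * I ≤ IS := by linarith
      _ ≤ (μ.real S)⁻¹ * IS :=
        le_mul_of_one_le_left hIS_nonneg ((one_le_inv₀ (hCinv.trans_le hp_lower)).mpr hp_le_one)
  · calc (μ.real S)⁻¹ * IS ≤ (1 - C⁻¹ ^ 2)⁻¹ * IS :=
          mul_le_mul_of_nonneg_right (inv_anti₀ hCinv hp_lower) hIS_nonneg
      _ ≤ (1 - C⁻¹ ^ 2)⁻¹ * I := mul_le_mul_of_nonneg_left hIS_le (inv_pos.mpr hCinv).le

end Truncation

theorem truncated_second_moment_loewner_bounds_general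
    {Ω : Type*} [MeasureSpace Ω] (μ : Measure Ω) [IsProbabilityMeasure μ]
    {d : ℕ} (X : Ω → EuclideanSpace ℝ (Fin d)) (hX : Measurable X)
    (τ C : ℝ) (hC : Real.sqrt τ < C)
    (Smat : Matrix (Fin d) (Fin d) ℝ)
    (hSmat : ∀ i j, Smat i j = ∫ ω, X ω i * X ω j ∂μ)
    (htr : Smat.trace ≤ (d : ℝ))
    (hint2 : ∀ i j, Integrable (fun ω => X ω i * X ω j) μ)
    (hint4 : ∀ u : EuclideanSpace ℝ (Fin d), Integrable (fun ω => ⟪u, X ω⟫_ℝ ^ 4) μ)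
    (hhc : ∀ u : EuclideanSpace ℝ (Fin d), ‖u‖ = 1 →
      ∫ ω, ⟪u, X ω⟫_ℝ ^ 4 ∂μ ≤ τ * (∫ ω, ⟪u, X ω⟫_ℝ ^ 2 ∂μ) ^ 2) :
    Matrix.PosSemidef
        ((Matrix.of fun i j =>
            ((μ {ω | ‖X ω‖ ≤ C * Real.sqrt d}).toReal)⁻¹ *
              ∫ ω in {ω | ‖X ω‖ ≤ C * Real.sqrt d}, X ω i * X ω j ∂μ) -
          (1 - Real.sqrt τ / C) • Smat) ∧
      Matrix.PosSemidef
        ((1 - C⁻¹ ^ 2)⁻¹ • Smat -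
          Matrix.of fun i j =>
            ((μ {ω | ‖X ω‖ ≤ C * Real.sqrt d}).toReal)⁻¹ *
              ∫ ω in {ω | ‖X ω‖ ≤ C * Real.sqrt d}, X ω i * X ω j ∂μ) := by
  set S := {ω | ‖X ω‖ ≤ C * √d}
  have hS : MeasurableSet S := measurableSet_le hX.norm measurable_const
  obtain rfl : Smat = secondMoment μ X := Matrix.ext hSmat
  have htail : μ.real Sᶜ ≤ C⁻¹ ^ 2 := by
    simpa only [S, Set.compl_ofPred, not_le] using measureReal_lt_norm_le_inv_sq
      (integrable_norm_sq hint2) ((Real.sqrt_nonneg τ).trans_lt hC)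
      ((trace_secondMoment hint2).symm.trans_le htr)
  have hbounds (u : EuclideanSpace ℝ (Fin d)) := truncated_integral_sq_bounds
    (integrable_inner_sq hint2 u) (hint4 u) (integral_inner_pow_four_le_of_norm_eq_one hhc u)
    hC hS htail
  have hint2S i j := (hint2 i j).restrict (s := S)
  change ((μ.real S)⁻¹ • secondMoment (μ.restrict S) X - _).PosSemidef ∧
    (_ - (μ.real S)⁻¹ • secondMoment (μ.restrict S) X).PosSemidef
  exact ⟨posSemidef_smul_secondMoment_sub_smul_secondMoment hint2S hint2 fun u => (hbounds u).1,
    posSemidef_smul_secondMoment_sub_smul_secondMoment hint2 hint2S fun u => (hbounds u).2⟩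

/-- Truncating a hypercontractive random vector at radius `C√d` does not distort its
second moment matrix much, in the Loewner order:
`(1 − √τ/C) Σ ⪯ E[XXᵀ | ‖X‖ ≤ C√d] ⪯ (1 − C⁻²)⁻¹ Σ`. -/
theorem truncated_second_moment_loewner_bounds
    {Ω : Type*} [MeasureSpace Ω] (μ : Measure Ω) [IsProbabilityMeasure μ]
    {d : ℕ} (X : Ω → EuclideanSpace ℝ (Fin d)) (hX : Measurable X)
    (τ C : ℝ) (hτ : 0 < τ) (hC : Real.sqrt τ < C)
    (Smat : Matrix (Fin d) (Fin d) ℝ)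
    (hSmat : ∀ i j, Smat i j = ∫ ω, X ω i * X ω j ∂μ)
    (htr : Smat.trace ≤ (d : ℝ))
    (hint2 : ∀ i j, Integrable (fun ω => X ω i * X ω j) μ)
    (hint4 : ∀ u : EuclideanSpace ℝ (Fin d), Integrable (fun ω => ⟪u, X ω⟫_ℝ ^ 4) μ)
    (hhc : ∀ u : EuclideanSpace ℝ (Fin d), ‖u‖ = 1 →
      ∫ ω, ⟪u, X ω⟫_ℝ ^ 4 ∂μ ≤ τ * (∫ ω, ⟪u, X ω⟫_ℝ ^ 2 ∂μ) ^ 2) :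
    Matrix.PosSemidef
        ((Matrix.of fun i j =>
            ((μ {ω | ‖X ω‖ ≤ C * Real.sqrt d}).toReal)⁻¹ *
              ∫ ω in {ω | ‖X ω‖ ≤ C * Real.sqrt d}, X ω i * X ω j ∂μ) -
          (1 - Real.sqrt τ / C) • Smat) ∧
      Matrix.PosSemidef
        ((1 - C⁻¹ ^ 2)⁻¹ • Smat -
          Matrix.of fun i j =>
            ((μ {ω | ‖X ω‖ ≤ C * Real.sqrt d}).toReal)⁻¹ *
              ∫ ω in {ω | ‖X ω‖ ≤ C * Real.sqrt d}, X ω i * X ω j ∂μ) :=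
  truncated_second_moment_loewner_bounds_general μ X hX τ C hC Smat hSmat htr hint2 hint4 hhc
end

section
/- For the robust linear regression model Y = ⟨X, w*⟩ + ε in one dimension with P(X = 1) = 1, for any σ > 0 and η ∈ (0,1) there exist two distributions D₁, D₂ over (X,Y), both satisfying bounded-noise conditions (Var(ε) ≤ σ², E[ε]=0, ε independent of X), with total variation distance d_TV(D₁, D₂) ≤ η/2 while the corresponding true parameters satisfy |w₁* − w₂*| ≥ c·σ√η for an absolute constant c > 0. -/
/-!
Take `D₁` to be the point mass at `(1, 0)`, so `w₁ = 0`, and obtain `D₂` from it by moving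
mass `p = η / 2` to the point `(1, y)` with `y = σ / √p`. Then `w₂ = p y = σ √p`, the noise of
`D₂` is centered with second moment `p (1 - p) y² = (1 - p) σ² ≤ σ²`, and `D₁`, `D₂` differ
only by the moved mass `p`. So a corruption of size `η / 2` shifts the parameter by `σ √(η / 2)`.
-/

open MeasureTheory ProbabilityTheory

lemma ENNReal.ofReal_one_sub_add_ofReal {p : ℝ} (hp0 : 0 ≤ p) (hp1 : p ≤ 1) :
    ENNReal.ofReal (1 - p) + ENNReal.ofReal p = 1 := by
  rw [← ENNReal.ofReal_add (by linarith) hp0, sub_add_cancel, ENNReal.ofReal_one]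

namespace MeasureTheory.Measure

variable {α β : Type*} [MeasurableSpace α] [MeasurableSpace β]

noncomputable def mixture (p : ℝ) (μ ν : Measure α) : Measure α :=
  ENNReal.ofReal (1 - p) • μ + ENNReal.ofReal p • ν

variable {p : ℝ} {μ ν : Measure α}

lemma mixture_self (hp0 : 0 ≤ p) (hp1 : p ≤ 1) (μ : Measure α) : mixture p μ μ = μ := by
  rw [mixture, ← add_smul, ENNReal.ofReal_one_sub_add_ofReal hp0 hp1, one_smul]

lemma map_mixture {f : α → β} (hf : Measurable f) :
    (mixture p μ ν).map f = mixture p (μ.map f) (ν.map f) := by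
  rw [mixture, mixture, Measure.map_add _ _ hf, Measure.map_smul, Measure.map_smul]

lemma isProbabilityMeasure_mixture (hp0 : 0 ≤ p) (hp1 : p ≤ 1)
    [IsProbabilityMeasure μ] [IsProbabilityMeasure ν] :
    IsProbabilityMeasure (mixture p μ ν) :=
  ⟨by simp [mixture, ENNReal.ofReal_one_sub_add_ofReal hp0 hp1]⟩

lemma toReal_mixture_apply (hp0 : 0 ≤ p) (hp1 : p ≤ 1) [IsFiniteMeasure μ]
    [IsFiniteMeasure ν] (s : Set α) :
    (mixture p μ ν s).toReal = (1 - p) * (μ s).toReal + p * (ν s).toReal := by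
  rw [mixture, add_apply, smul_apply, smul_apply, smul_eq_mul, smul_eq_mul,
    ENNReal.toReal_add (by finiteness) (by finiteness), ENNReal.toReal_mul,
    ENNReal.toReal_mul, ENNReal.toReal_ofReal (by linarith), ENNReal.toReal_ofReal hp0]

lemma abs_toReal_sub_mixture_apply_le (hp0 : 0 ≤ p) (hp1 : p ≤ 1)
    [IsProbabilityMeasure μ] [IsProbabilityMeasure ν] (s : Set α) :
    |(μ s).toReal - (mixture p μ ν s).toReal| ≤ p := by
  have hμ : (μ s).toReal ≤ 1 := measureReal_le_one
  have hν : (ν s).toReal ≤ 1 := measureReal_le_one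
  rw [toReal_mixture_apply hp0 hp1, abs_le]
  constructor <;> nlinarith [ENNReal.toReal_nonneg (a := μ s), ENNReal.toReal_nonneg (a := ν s)]

lemma integral_mixture (hp0 : 0 ≤ p) (hp1 : p ≤ 1) {f : α → ℝ}
    (hμ : Integrable f μ) (hν : Integrable f ν) :
    ∫ x, f x ∂mixture p μ ν = (1 - p) * ∫ x, f x ∂μ + p * ∫ x, f x ∂ν := by
  rw [mixture, integral_add_measure (hμ.smul_measure (by simp)) (hν.smul_measure (by simp)),
    integral_smul_measure, integral_smul_measure, ENNReal.toReal_ofReal (by linarith),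
    ENNReal.toReal_ofReal hp0, smul_eq_mul, smul_eq_mul]

end MeasureTheory.Measure

lemma ProbabilityTheory.indepFun_of_map_eq_dirac {Ω β γ : Type*} [MeasurableSpace Ω]
    [MeasurableSpace β] [MeasurableSingletonClass β] [MeasurableSpace γ] {μ : Measure Ω}
    [IsProbabilityMeasure μ] {X : Ω → β} {c : β} (hX : AEMeasurable X μ)
    (h : μ.map X = Measure.dirac c) (Y : Ω → γ) : IndepFun X Y μ := by
  have hXc : X =ᵐ[μ] fun _ ↦ c :=
    ae_of_ae_map (p := fun b ↦ b = c) hX (by rw [h]; exact ae_eq_dirac id)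
  exact (indepFun_const_left c Y).congr hXc.symm .rfl

open Measure in
noncomputable def twoPointModel (p y : ℝ) : Measure (ℝ × ℝ) :=
  mixture p (dirac (1, 0)) (dirac (1, y))

section twoPointModel

variable {p : ℝ} (y : ℝ)

lemma isProbabilityMeasure_twoPointModel (hp0 : 0 ≤ p) (hp1 : p ≤ 1) :
    IsProbabilityMeasure (twoPointModel p y) :=
  Measure.isProbabilityMeasure_mixture hp0 hp1

lemma map_fst_twoPointModel (hp0 : 0 ≤ p) (hp1 : p ≤ 1) :
    (twoPointModel p y).map Prod.fst = Measure.dirac 1 := by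
  rw [twoPointModel, Measure.map_mixture measurable_fst, Measure.map_dirac' measurable_fst,
    Measure.map_dirac' measurable_fst, Measure.mixture_self hp0 hp1]

lemma integral_twoPointModel_noise (hp0 : 0 ≤ p) (hp1 : p ≤ 1) (g : ℝ → ℝ) :
    ∫ q, g (q.2 - p * y * q.1) ∂twoPointModel p y =
      (1 - p) * g (-(p * y)) + p * g ((1 - p) * y) := by
  rw [twoPointModel, Measure.integral_mixture hp0 hp1 (integrable_dirac enorm_lt_top)
    (integrable_dirac enorm_lt_top), integral_dirac, integral_dirac]
  ring_nf

end twoPointModel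

/-- Lower bound for one-dimensional robust linear regression with `X = 1` a.s.:
for any `σ > 0`, `η ∈ (0,1)` there are two generative distributions over `(X, Y)`
with centered noise of variance at most `σ²`, independent of `X`, whose total
variation distance is at most `η/2`, yet whose true parameters differ by at least
`c·σ·√η` for an absolute constant `c > 0`. -/
theorem robust_regression_lower_bound_heavy_tailed :
    ∃ c : ℝ, 0 < c ∧ ∀ σ η : ℝ, 0 < σ → 0 < η → η < 1 →
      ∃ (D₁ D₂ : Measure (ℝ × ℝ)) (w₁ w₂ : ℝ),
        IsProbabilityMeasure D₁ ∧ IsProbabilityMeasure D₂ ∧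
        Measure.map Prod.fst D₁ = Measure.dirac 1 ∧
        Measure.map Prod.fst D₂ = Measure.dirac 1 ∧
        IndepFun Prod.fst (fun p : ℝ × ℝ => p.2 - w₁ * p.1) D₁ ∧
        IndepFun Prod.fst (fun p : ℝ × ℝ => p.2 - w₂ * p.1) D₂ ∧
        (∫ p : ℝ × ℝ, (p.2 - w₁ * p.1) ∂D₁) = 0 ∧
        (∫ p : ℝ × ℝ, (p.2 - w₂ * p.1) ∂D₂) = 0 ∧
        (∫ p : ℝ × ℝ, (p.2 - w₁ * p.1) ^ 2 ∂D₁) ≤ σ ^ 2 ∧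
        (∫ p : ℝ × ℝ, (p.2 - w₂ * p.1) ^ 2 ∂D₂) ≤ σ ^ 2 ∧
        (∀ s : Set (ℝ × ℝ), MeasurableSet s →
          |(D₁ s).toReal - (D₂ s).toReal| ≤ η / 2) ∧
        c * σ * Real.sqrt η ≤ |w₁ - w₂| := by
  refine ⟨1 / 2, by norm_num, fun σ η hσ hη hη1 ↦ ?_⟩
  obtain ⟨p, hp0, hp1, rfl⟩ : ∃ p, 0 < p ∧ p ≤ 1 ∧ η = 2 * p :=
    ⟨η / 2, by positivity, by linarith, by ring⟩
  obtain ⟨y, hy⟩ : ∃ y, y = σ / √p := ⟨_, rfl⟩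
  have hpy : p * y = σ * √p := by rw [hy, mul_div_left_comm, Real.div_sqrt]
  have hpy2 : p * y ^ 2 = σ ^ 2 := by
    calc p * y ^ 2 = p * y * y := by ring
      _ = σ ^ 2 := by rw [hpy, hy]; field_simp
  have hsqrt : √(2 * p) ≤ 2 * √p := by
    rw [Real.sqrt_le_iff, mul_pow, Real.sq_sqrt hp0.le]
    exact ⟨by positivity, by linarith⟩
  have hfst₁ : (Measure.dirac ((1 : ℝ), (0 : ℝ))).map Prod.fst = Measure.dirac 1 :=
    Measure.map_dirac' measurable_fst _
  have hfst₂ := map_fst_twoPointModel y hp0.le hp1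
  have hD₂ := isProbabilityMeasure_twoPointModel y hp0.le hp1
  refine ⟨Measure.dirac (1, 0), twoPointModel p y, 0, p * y, inferInstance, hD₂, hfst₁, hfst₂,
    indepFun_of_map_eq_dirac measurable_fst.aemeasurable hfst₁ _,
    indepFun_of_map_eq_dirac measurable_fst.aemeasurable hfst₂ _, by simp, ?_,
    by simpa using sq_nonneg σ, ?_, fun s _ ↦ ?_, ?_⟩
  · exact (integral_twoPointModel_noise y hp0.le hp1 id).trans (by simp only [id]; ring)
  · refine (integral_twoPointModel_noise y hp0.le hp1 (· ^ 2)).trans_le ?_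
    calc (1 - p) * (-(p * y)) ^ 2 + p * ((1 - p) * y) ^ 2 = (1 - p) * (p * y ^ 2) := by ring
      _ ≤ σ ^ 2 := by rw [hpy2]; nlinarith
  · exact (Measure.abs_toReal_sub_mixture_apply_le hp0.le hp1 s).trans_eq (by ring)
  · rw [zero_sub, abs_neg, hpy, abs_of_pos (by positivity)]
    nlinarith
end
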